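/- arXiv:1712.02570 — 2 statements merged into one kernel-verified Lean document; each statement's English description precedes it below -/
import Mathlib

section
/- If U is a connected subset of a topological space X and S ⊆ X × Q satisfies: (y,0) ∈ S for all y ∈ U, and for every (y,s) ∈ S with y ∈ U the segment {(y,t·s) : t∈[0,1]} lies in S, then (U × Q) ∩ S is connected. -/
/-!
The slice `U × {0}` is connected, and every point `(y, s)` of the set is joined to it by the
segment `t ↦ (y, t • s)`, `t ∈ [0, 1]`, which stays in the set because both `S` and the cube
`Q` are star-shaped about `0` in the second coordinate. A union of connected sets all meeting
one connected set is connected.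
-/

open Set

section StarShapedFibres

variable {X E : Type*} [TopologicalSpace X] [AddCommGroup E] [Module ℝ E] [TopologicalSpace E]
  [ContinuousSMul ℝ E]

theorem isConnected_fst_preimage_inter_of_segment_mem {U : Set X} (hU : IsConnected U)
    {S : Set (X × E)} (hS0 : ∀ y ∈ U, (y, (0 : E)) ∈ S)
    (hseg : ∀ p ∈ S, p.1 ∈ U → ∀ t ∈ Icc (0 : ℝ) 1, (p.1, t • p.2) ∈ S) :
    IsConnected (Prod.fst ⁻¹' U ∩ S) := by
  obtain ⟨y₀, hy₀⟩ := hU.nonempty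
  have hzero_sub : U ×ˢ {(0 : E)} ⊆ Prod.fst ⁻¹' U ∩ S := by
    rintro ⟨y, _⟩ ⟨hy, rfl⟩
    exact ⟨hy, hS0 y hy⟩
  refine ⟨⟨(y₀, 0), hy₀, hS0 y₀ hy₀⟩, isPreconnected_of_forall (y₀, 0) fun p hp => ?_⟩
  set segment := (fun t : ℝ => (p.1, t • p.2)) '' Icc 0 1
  have hsegment_sub : segment ⊆ Prod.fst ⁻¹' U ∩ S := by
    rintro _ ⟨t, ht, rfl⟩
    exact ⟨hp.1, hseg p hp.2 hp.1 t ht⟩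
  have hp_mem : p ∈ segment := ⟨1, right_mem_Icc.2 zero_le_one, by simp⟩
  have hbase_mem : (p.1, (0 : E)) ∈ segment := ⟨0, left_mem_Icc.2 zero_le_one, by simp⟩
  refine ⟨U ×ˢ {0} ∪ segment, union_subset hzero_sub hsegment_sub, Or.inl ⟨hy₀, rfl⟩,
    Or.inr hp_mem, ?_⟩
  exact (hU.isPreconnected.prod isPreconnected_singleton).union (p.1, 0) ⟨hp.1, rfl⟩ hbase_mem
    (isPreconnected_Icc.image _ (by fun_prop))

theorem isConnected_prod_inter_of_segment_mem {U : Set X} (hU : IsConnected U)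
    {Q : Set E} (hQ0 : (0 : E) ∈ Q) (hQ : StarConvex ℝ 0 Q)
    {S : Set (X × E)} (hS0 : ∀ y ∈ U, (y, (0 : E)) ∈ S)
    (hseg : ∀ p ∈ S, p.1 ∈ U → ∀ t ∈ Icc (0 : ℝ) 1, (p.1, t • p.2) ∈ S) :
    IsConnected ((U ×ˢ Q) ∩ S) := by
  have hslab : (U ×ˢ Q) ∩ S = Prod.fst ⁻¹' U ∩ (Prod.snd ⁻¹' Q ∩ S) := by
    rw [prod_eq, inter_assoc]
  rw [hslab]
  refine isConnected_fst_preimage_inter_of_segment_mem hU (fun y hy => ⟨hQ0, hS0 y hy⟩) ?_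
  rintro p ⟨hpQ, hpS⟩ hpU t ht
  exact ⟨hQ.smul_mem hpQ ht.1 ht.2, hseg p hpS hpU t ht⟩

end StarShapedFibres

theorem convex_unitCube (ι : Type*) : Convex ℝ {x : ι → ℝ | ∀ n, x n ∈ Icc (0 : ℝ) 1} := by
  simpa only [Set.pi, mem_univ, true_imp_iff] using convex_pi (𝕜 := ℝ) (s := univ) fun (_ : ι) _ => convex_Icc (0 : ℝ) 1

/-- If `U` is a connected subset of `X` and `S ⊆ X × Q` contains `(y,0)` for
every `y ∈ U` and with each point `(y,s) ∈ S`, `y ∈ U`, contains the segment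
`{(y, t•s) : t ∈ [0,1]}`, then `(U × Q) ∩ S` is connected. -/
theorem slab_connected
    {X : Type*} [TopologicalSpace X]
    (Q : Set (ℕ → ℝ)) (hQ : Q = {x | ∀ n, x n ∈ Set.Icc (0 : ℝ) 1})
    (U : Set X) (hU : IsConnected U)
    (S : Set (X × (ℕ → ℝ)))
    (hS0 : ∀ y ∈ U, ((y, (0 : ℕ → ℝ)) : X × (ℕ → ℝ)) ∈ S)
    (hseg : ∀ p ∈ S, p.1 ∈ U → ∀ t ∈ Set.Icc (0 : ℝ) 1, (p.1, t • p.2) ∈ S) :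
    IsConnected ((U ×ˢ Q) ∩ S) := by
  have hQ0 : (0 : ℕ → ℝ) ∈ Q := hQ ▸ fun _ => left_mem_Icc.2 zero_le_one
  exact isConnected_prod_inter_of_segment_mem hU hQ0
    ((hQ ▸ convex_unitCube ℕ).starConvex hQ0) hS0 hseg
end

section
/- Let 𝒳 = {(x,y) ∈ Q² : y has at most one nonzero coordinate}, and for sequences A = (A_n), B = (B_n) of closed subsets of Q, suppose f : Q → Q is a homeomorphism and σ a permutation of ℕ with f[A_n] = B_{σ(n)} for all n. Then the map (f × h_{σ^{-1}})|_𝒳, where h_τ(y)_n = y_{τ(n)}, is a homeomorphism of 𝒳 onto itself carrying Ξ(A) onto Ξ(B) and Q × {0} onto Q × {0}, where Ξ(C) = {(x,y) ∈ 𝒳 : ∀n, y_n = 0 ∨ x ∈ C_n}. -/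
open Set

lemma Equiv.image_eq_of_forall_apply_mem_iff {α γ : Type*} (e : α ≃ γ) {s : Set α} {t : Set γ}
    (h : ∀ p, e p ∈ t ↔ p ∈ s) : e '' s = t :=
  ((e.preimage_eq_iff_eq_image t s).1 (Set.ext h)).symm

namespace Homeomorph

variable {X X' ι β : Type*} [TopologicalSpace X] [TopologicalSpace X'] [TopologicalSpace β]

/-- `(x, y) ↦ (f x, y ∘ σ⁻¹)`, i.e. `f × h_{σ⁻¹}`. -/
def prodPermuteCoords (f : X ≃ₜ X') (σ : Equiv.Perm ι) : X × (ι → β) ≃ₜ X' × (ι → β) :=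
  f.prodCongr (piCongrLeft (Y := fun _ => β) σ.symm).symm

end Homeomorph

section SingleSupport

variable {X X' ι β : Type*} [Zero β]

/-- `Ξ(C)`: the pairs `(x, y)` with at most one nonzero coordinate `y n`, and `x ∈ C n` for it.
`C = univ` gives `𝒳` and `C = ∅` gives `X × {0}`. -/
def singleSupportOver (C : ι → Set X) : Set (X × (ι → β)) :=
  {p | Pairwise (fun m n => p.2 m = 0 ∨ p.2 n = 0) ∧ ∀ n, p.2 n = 0 ∨ p.1 ∈ C n}

variable [TopologicalSpace X] [TopologicalSpace X'] [TopologicalSpace β]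

lemma image_prodPermuteCoords_singleSupportOver (f : X ≃ₜ X') (σ : Equiv.Perm ι)
    {A : ι → Set X} {B : ι → Set X'} (hf : ∀ n, f '' A n = B (σ n)) :
    Homeomorph.prodPermuteCoords (β := β) f σ '' singleSupportOver A = singleSupportOver B := by
  refine Equiv.image_eq_of_forall_apply_mem_iff
    (Homeomorph.prodPermuteCoords (β := β) f σ).toEquiv fun ⟨x, y⟩ => ?_
  have hpair : Pairwise (fun m n => y (σ.symm m) = 0 ∨ y (σ.symm n) = 0) ↔
      Pairwise (fun m n => y m = 0 ∨ y n = 0) :=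
    EquivLike.pairwise_comp_iff σ.symm fun m n => y m = 0 ∨ y n = 0
  have hcoord : (∀ n, y (σ.symm n) = 0 ∨ f x ∈ B n) ↔ ∀ n, y n = 0 ∨ x ∈ A n := by
    rw [← σ.forall_congr_right]
    simp only [Equiv.symm_apply_apply, ← hf, f.injective.mem_set_image]
  exact and_congr hpair hcoord

end SingleSupport

theorem perm_homeo_transfers_general
    (𝒳 : Set ((ℕ → unitInterval) × (ℕ → unitInterval)))
    (h𝒳 : 𝒳 = {p | ∀ m n, m ≠ n → (p.2 m : ℝ) = 0 ∨ (p.2 n : ℝ) = 0})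
    (A B : ℕ → Set (ℕ → unitInterval))
    (f : (ℕ → unitInterval) ≃ₜ (ℕ → unitInterval)) (σ : Equiv.Perm ℕ)
    (hf : ∀ n, (⇑f) '' A n = B (σ n))
    (g : (ℕ → unitInterval) × (ℕ → unitInterval) →
         (ℕ → unitInterval) × (ℕ → unitInterval))
    (hg : g = fun p => (f p.1, fun n => p.2 (σ.symm n)))
    (Ξ : (ℕ → Set (ℕ → unitInterval)) →
         Set ((ℕ → unitInterval) × (ℕ → unitInterval)))
    (hΞ : ∀ C, Ξ C = {p | p ∈ 𝒳 ∧ ∀ n, (p.2 n : ℝ) = 0 ∨ p.1 ∈ C n}) :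
    g '' 𝒳 = 𝒳 ∧
    g '' Ξ A = Ξ B ∧
    g '' {p | p ∈ 𝒳 ∧ ∀ n, (p.2 n : ℝ) = 0}
      = {p | p ∈ 𝒳 ∧ ∀ n, (p.2 n : ℝ) = 0} ∧
    ∃ g' : 𝒳 ≃ₜ 𝒳, ∀ p : 𝒳,
      (g' p : (ℕ → unitInterval) × (ℕ → unitInterval))
        = g (p : (ℕ → unitInterval) × (ℕ → unitInterval)) := by
  have h𝒳' : 𝒳 = singleSupportOver fun _ => univ := by
    simp [h𝒳, singleSupportOver, Pairwise]
  have hΞ' : ∀ C, Ξ C = singleSupportOver C := by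
    simp [hΞ, h𝒳', singleSupportOver]
  have hzero : {p | p ∈ 𝒳 ∧ ∀ n, (p.2 n : ℝ) = 0} = singleSupportOver fun _ => ∅ := by
    simp [h𝒳', singleSupportOver]
  obtain rfl : g = Homeomorph.prodPermuteCoords f σ := hg
  have hX : Homeomorph.prodPermuteCoords f σ '' 𝒳 = 𝒳 := by
    rw [h𝒳']
    exact image_prodPermuteCoords_singleSupportOver f σ fun _ =>
      image_univ_of_surjective f.surjective
  refine ⟨hX, ?_, ?_, ⟨(Homeomorph.image _ 𝒳).trans (.setCongr hX), fun _ => rfl⟩⟩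
  · rw [hΞ', hΞ']
    exact image_prodPermuteCoords_singleSupportOver f σ hf
  · rw [hzero]
    exact image_prodPermuteCoords_singleSupportOver f σ fun _ => image_empty _

/-- If `f : Q → Q` is a homeomorphism and `σ` a permutation of `ℕ` with
`f[A n] = B (σ n)` for all `n`, then `(f × h_{σ⁻¹})|𝒳` is a homeomorphism of
`𝒳` onto itself carrying `Ξ(A)` onto `Ξ(B)` and `Q × {0}` onto `Q × {0}`. -/
theorem perm_homeo_transfers
    (𝒳 : Set ((ℕ → unitInterval) × (ℕ → unitInterval)))
    (h𝒳 : 𝒳 = {p | ∀ m n, m ≠ n → (p.2 m : ℝ) = 0 ∨ (p.2 n : ℝ) = 0})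
    (A B : ℕ → Set (ℕ → unitInterval))
    (hA : ∀ n, IsClosed (A n)) (hB : ∀ n, IsClosed (B n))
    (f : (ℕ → unitInterval) ≃ₜ (ℕ → unitInterval)) (σ : Equiv.Perm ℕ)
    (hf : ∀ n, (⇑f) '' A n = B (σ n))
    (g : (ℕ → unitInterval) × (ℕ → unitInterval) →
         (ℕ → unitInterval) × (ℕ → unitInterval))
    (hg : g = fun p => (f p.1, fun n => p.2 (σ.symm n)))
    (Ξ : (ℕ → Set (ℕ → unitInterval)) →
         Set ((ℕ → unitInterval) × (ℕ → unitInterval)))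
    (hΞ : ∀ C, Ξ C = {p | p ∈ 𝒳 ∧ ∀ n, (p.2 n : ℝ) = 0 ∨ p.1 ∈ C n}) :
    g '' 𝒳 = 𝒳 ∧
    g '' Ξ A = Ξ B ∧
    g '' {p | p ∈ 𝒳 ∧ ∀ n, (p.2 n : ℝ) = 0}
      = {p | p ∈ 𝒳 ∧ ∀ n, (p.2 n : ℝ) = 0} ∧
    ∃ g' : 𝒳 ≃ₜ 𝒳, ∀ p : 𝒳,
      (g' p : (ℕ → unitInterval) × (ℕ → unitInterval))
        = g (p : (ℕ → unitInterval) × (ℕ → unitInterval)) :=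
  perm_homeo_transfers_general 𝒳 h𝒳 A B f σ hf g hg Ξ hΞ
end
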